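/- arXiv:1802.06942 — 4 statements merged into one kernel-verified Lean document; each statement's English description precedes it below -/
import Mathlib

section
/- Let (M,d) be a metric space, α ≥ 1, V ⊆ M a set of diameter at most Δ with Δ > 0, and t ∈ V. Let C ⊆ V be a (Δ/(8(α+1)))-cover of V, i.e. for every v ∈ V there exists c ∈ C with d(v,c) ≤ Δ/(8(α+1)). Suppose c_i ∈ C satisfies: for every c_j ∈ C with d(c_i,c_j) > Δ/8 one has d(t,c_i) ≤ α·d(t,c_j). Then d(t,c_i) ≤ Δ·(α+2)/(8(α+1)). -/
/-! Let `c ∈ C` be a cover point within `r = Δ / (8(α+1))` of `t`. Either `cᵢ` is within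
`Δ / 8 = (α+1) r` of `c`, and the triangle inequality gives `d(t, cᵢ) ≤ (α+2) r`, or it is
farther, and then `d(t, cᵢ) ≤ α d(t, c) ≤ α r`. -/

lemma dist_le_of_dist_le_of_far {M : Type*} [PseudoMetricSpace M] {t x c : M} {α r : ℝ}
    (hα : 0 ≤ α) (htc : dist t c ≤ r)
    (hfar : (α + 1) * r < dist x c → dist t x ≤ α * dist t c) :
    dist t x ≤ (α + 2) * r := by
  have hr : 0 ≤ r := dist_nonneg.trans htc
  by_cases hnear : dist x c ≤ (α + 1) * r
  · calc dist t x ≤ dist t c + dist x c := dist_triangle_right t x c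
      _ ≤ r + (α + 1) * r := add_le_add htc hnear
      _ = (α + 2) * r := by ring
  · calc dist t x ≤ α * dist t c := hfar (not_le.mp hnear)
      _ ≤ α * r := mul_le_mul_of_nonneg_left htc hα
      _ ≤ (α + 2) * r := by nlinarith

theorem stmt_4_general {M : Type*} [MetricSpace M] (α : ℝ) (hα : 1 ≤ α)
    (V : Set M) (Δ : ℝ)
    (t : M) (ht : t ∈ V) (C : Set M)
    (hcover : ∀ v ∈ V, ∃ c ∈ C, dist v c ≤ Δ / (8 * (α + 1)))
    (ci : M)
    (hwin : ∀ cj ∈ C, dist ci cj > Δ / 8 → dist t ci ≤ α * dist t cj) :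
    dist t ci ≤ Δ * (α + 2) / (8 * (α + 1)) := by
  obtain ⟨c, hcC, htc⟩ := hcover t ht
  have hΔ8 : Δ / 8 = (α + 1) * (Δ / (8 * (α + 1))) := by
    field_simp [show α + 1 ≠ 0 by linarith]
  have hbound := dist_le_of_dist_le_of_far (by linarith) htc fun hfar ↦
    hwin c hcC (hΔ8 ▸ hfar)
  calc dist t ci ≤ (α + 2) * (Δ / (8 * (α + 1))) := hbound
    _ = Δ * (α + 2) / (8 * (α + 1)) := by ring

theorem stmt_4 {M : Type*} [MetricSpace M] (α : ℝ) (hα : 1 ≤ α)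
    (V : Set M) (Δ : ℝ) (hΔ : 0 < Δ)
    (hdiam : ∀ p ∈ V, ∀ q ∈ V, dist p q ≤ Δ)
    (t : M) (ht : t ∈ V) (C : Set M) (hCV : C ⊆ V)
    (hcover : ∀ v ∈ V, ∃ c ∈ C, dist v c ≤ Δ / (8 * (α + 1)))
    (ci : M) (hci : ci ∈ C)
    (hwin : ∀ cj ∈ C, dist ci cj > Δ / 8 → dist t ci ≤ α * dist t cj) :
    dist t ci ≤ Δ * (α + 2) / (8 * (α + 1)) :=
  stmt_4_general α hα V Δ t ht C hcover ci hwin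
end

section
/- Let (M,d) be a metric space and μ a finite measure on M with μ(M) > 0 that is c-doubling for some c ≥ 1. Suppose the diameter of M equals Δ > 0 and is attained, i.e. there exist u, v ∈ M with d(u,v) = Δ and d(p,q) ≤ Δ for all p,q ∈ M. Then for every point p ∈ M and every radius ρ ≤ (3/16)·Δ, μ(B̄(p,ρ)) ≤ (1 − 1/c²)·μ(M). -/
/-! Since the diameter `Δ` is attained at `u, v`, some point `w` lies at distance at least `Δ / 2`
from `p`. The whole space is the ball of radius `Δ = 2² · Δ / 4` about `w`, so two doubling steps
give `μ(M) ≤ c² μ(B̄(w, Δ/4))`. As `ρ + Δ/4 < Δ/2`, the ball `B̄(p, ρ)` is disjoint from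
`B̄(w, Δ/4)`, hence its mass is at most `μ(M) - c⁻² μ(M)`. -/

open MeasureTheory Metric
open scoped NNReal ENNReal

theorem ENNReal.le_one_sub_inv_mul_of_add_le {a b c T : ℝ≥0∞} (hT : T ≠ ∞)
    (hab : a + b ≤ T) (hb : T ≤ c * b) : a ≤ (1 - c⁻¹) * T := by
  have hcb : c⁻¹ * T ≤ b := by
    rw [← ENNReal.div_eq_inv_mul]
    exact ENNReal.div_le_of_le_mul' hb
  calc a ≤ T - b := ENNReal.le_sub_of_add_le_right (ne_top_of_le_ne_top hT (le_add_self.trans hab)) hab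
    _ ≤ T - c⁻¹ * T := tsub_le_tsub_left hcb T
    _ = (1 - c⁻¹) * T := by rw [ENNReal.sub_mul fun _ _ => hT, one_mul]

theorem Metric.exists_half_dist_le_dist {X : Type*} [PseudoMetricSpace X] (p u v : X) :
    ∃ w, dist u v / 2 ≤ dist p w := by
  by_contra! h
  linarith [dist_triangle_left u v p, h u, h v]

section Doubling

variable {X : Type*} [PseudoMetricSpace X] [MeasurableSpace X] {μ : Measure X} {c : ℝ≥0∞}

theorem measure_closedBall_two_pow_mul_le
    (hdbl : ∀ (x : X) (r : ℝ), 0 < r → μ (closedBall x (2 * r)) ≤ c * μ (closedBall x r))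
    (x : X) {r : ℝ} (hr : 0 < r) (n : ℕ) :
    μ (closedBall x (2 ^ n * r)) ≤ c ^ n * μ (closedBall x r) := by
  induction n with
  | zero => simp
  | succ n ih =>
    calc μ (closedBall x (2 ^ (n + 1) * r)) = μ (closedBall x (2 * (2 ^ n * r))) := by
          rw [pow_succ', mul_assoc]
      _ ≤ c * μ (closedBall x (2 ^ n * r)) := hdbl x _ (by positivity)
      _ ≤ c * (c ^ n * μ (closedBall x r)) := by gcongr
      _ = c ^ (n + 1) * μ (closedBall x r) := by rw [pow_succ', mul_assoc]

theorem measure_univ_le_sq_mul_closedBall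
    (hdbl : ∀ (x : X) (r : ℝ), 0 < r → μ (closedBall x (2 * r)) ≤ c * μ (closedBall x r))
    {Δ : ℝ} (hΔ : 0 < Δ) (hdiam : ∀ p q : X, dist p q ≤ Δ) (w : X) :
    μ Set.univ ≤ c ^ 2 * μ (closedBall w (Δ / 4)) := by
  have hcover : closedBall w (2 ^ 2 * (Δ / 4)) = Set.univ :=
    Set.eq_univ_of_forall fun q => mem_closedBall.2 (by linarith [hdiam q w])
  rw [← hcover]
  exact measure_closedBall_two_pow_mul_le hdbl w (by positivity) 2

end Doubling

theorem stmt_6_general {M : Type*} [MetricSpace M] [MeasurableSpace M] [BorelSpace M]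
    (μ : Measure M) [IsFiniteMeasure μ]
    (c : ℝ≥0)
    (hdbl : ∀ (x : M) (r : ℝ), 0 < r →
      μ (closedBall x (2 * r)) ≤ c * μ (closedBall x r))
    (Δ : ℝ) (hΔ : 0 < Δ) (u v : M) (huv : dist u v = Δ)
    (hdiam : ∀ p q : M, dist p q ≤ Δ)
    (p : M) (ρ : ℝ) (hρ : ρ ≤ 3 / 16 * Δ) :
    μ (closedBall p ρ) ≤ (1 - ((c : ℝ≥0∞))⁻¹ ^ 2) * μ Set.univ := by
  obtain ⟨w, hw⟩ := exists_half_dist_le_dist p u v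
  have hdisj : Disjoint (closedBall p ρ) (closedBall w (Δ / 4)) :=
    closedBall_disjoint_closedBall (by linarith)
  have hsum : μ (closedBall p ρ) + μ (closedBall w (Δ / 4)) ≤ μ Set.univ := by
    rw [← measure_union hdisj measurableSet_closedBall]
    exact measure_mono (Set.subset_univ _)
  rw [← ENNReal.inv_pow]
  exact ENNReal.le_one_sub_inv_mul_of_add_le (measure_ne_top μ _) hsum
    (measure_univ_le_sq_mul_closedBall hdbl hΔ hdiam w)

theorem stmt_6 {M : Type*} [MetricSpace M] [MeasurableSpace M] [BorelSpace M]
    (μ : Measure M) [IsFiniteMeasure μ] (hpos : 0 < μ Set.univ)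
    (c : ℝ≥0) (hc : 1 ≤ c)
    (hdbl : ∀ (x : M) (r : ℝ), 0 < r →
      μ (closedBall x (2 * r)) ≤ c * μ (closedBall x r))
    (Δ : ℝ) (hΔ : 0 < Δ) (u v : M) (huv : dist u v = Δ)
    (hdiam : ∀ p q : M, dist p q ≤ Δ)
    (p : M) (ρ : ℝ) (hρ : ρ ≤ 3 / 16 * Δ) :
    μ (closedBall p ρ) ≤ (1 - ((c : ℝ≥0∞))⁻¹ ^ 2) * μ Set.univ :=
  stmt_6_general μ c hdbl Δ hΔ u v huv hdiam p ρ hρ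
end

section
/- Let (M,d) be a metric space with diameter at most Δ, where Δ > 0, and let μ be a finite measure on M that is c-doubling for some c ≥ 1. Let α ≥ 1 and 0 < β ≤ 1 be real numbers, let x, y ∈ M with d(x,y) ≥ β·Δ, and set l = ⌈log₂(2(α+1)/β)⌉. Then μ({z ∈ M : α·d(z,y) < d(z,x) fails}) ≤ (1 − c^{-l})·μ(M). In other words, the α-Voronoi cell Vor(y,x,M) = {z ∈ M : α·d(z,y) < d(z,x)} has measure at least c^{-l}·μ(M). -/
open MeasureTheory Metric
open scoped NNReal ENNReal

theorem stmt_12 {M : Type*} [MetricSpace M] [MeasurableSpace M] [BorelSpace M]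
    (Δ : ℝ) (hΔ : 0 < Δ) (hdiam : ∀ p q : M, dist p q ≤ Δ)
    (μ : Measure M) [IsFiniteMeasure μ]
    (c : ℝ≥0) (hc : 1 ≤ c)
    (hdbl : ∀ (x : M) (r : ℝ), 0 < r →
      μ (closedBall x (2 * r)) ≤ c * μ (closedBall x r))
    (α β : ℝ) (hα : 1 ≤ α) (hβ0 : 0 < β) (hβ1 : β ≤ 1)
    (x y : M) (hxy : β * Δ ≤ dist x y)
    (l : ℕ) (hl : (l : ℤ) = ⌈Real.logb 2 (2 * (α + 1) / β)⌉) :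
    μ {z : M | ¬ α * dist z y < dist z x} ≤ (1 - ((c : ℝ≥0∞))⁻¹ ^ l) * μ Set.univ ∧
      ((c : ℝ≥0∞))⁻¹ ^ l * μ Set.univ ≤ μ {z : M | α * dist z y < dist z x} := by
  set S : Set M := {z : M | α * dist z y < dist z x} with hS
  have hSopen : IsOpen S := isOpen_lt (by continuity) (by continuity)
  set X : ℝ := 2 * (α + 1) / β with hX
  have hXpos : 0 < X := by positivity
  -- 2^l ≥ X
  have hlog : Real.logb 2 X ≤ (l : ℝ) := by
    have := Int.le_ceil (Real.logb 2 X)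
    rw [← hl] at this
    exact_mod_cast this
  have hpow : X ≤ (2 : ℝ) ^ l := by
    calc X = (2 : ℝ) ^ (Real.logb 2 X) := (Real.rpow_logb (by norm_num) (by norm_num) hXpos).symm
    _ ≤ (2 : ℝ) ^ ((l : ℝ)) := by
        exact Real.rpow_le_rpow_left_iff (by norm_num : (1:ℝ) < 2) |>.mpr hlog
    _ = (2 : ℝ) ^ l := by rw [Real.rpow_natCast]
  set ρ : ℝ := Δ / 2 ^ l with hρdef
  have h2l : (0:ℝ) < 2 ^ l := by positivity
  have hρpos : 0 < ρ := by positivity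
  have hρΔ : (2 : ℝ) ^ l * ρ = Δ := by rw [hρdef]; field_simp
  have hdpos : 0 < dist x y := lt_of_lt_of_le (by positivity) hxy
  -- (α+1) * ρ < dist x y
  have hkey : (α + 1) * ρ < dist x y := by
    have h1 : (α + 1) * ρ ≤ β * Δ / 2 := by
      have hXle : 2 * (α + 1) ≤ β * 2 ^ l := by
        rw [hX, div_le_iff₀ hβ0] at hpow
        linarith
      rw [hρdef, mul_div_assoc', div_le_div_iff₀ h2l (by norm_num)]
      nlinarith
    have h2 : β * Δ / 2 < dist x y := by linarith
    linarith
  -- ball inside Voronoi cell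
  have hball : closedBall y ρ ⊆ S := by
    intro z hz
    simp only [mem_closedBall] at hz
    have ht : dist x y ≤ dist z x + dist z y := by
      have := dist_triangle x z y
      rw [dist_comm x z] at this
      linarith
    have : α * dist z y ≤ α * ρ := by
      have := dist_nonneg (x := z) (y := y)
      nlinarith
    simp only [hS, Set.mem_setOf_eq]
    nlinarith
  -- doubling iterated
  have hiter : ∀ n : ℕ, μ (closedBall y ((2:ℝ) ^ n * ρ)) ≤ (c : ℝ≥0∞) ^ n * μ (closedBall y ρ) := by
    intro n
    induction n with
    | zero => simp
    | succ n ih =>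
      have hr : (0:ℝ) < 2 ^ n * ρ := by positivity
      have h1 : ((2:ℝ) ^ (n+1) * ρ) = 2 * ((2:ℝ) ^ n * ρ) := by ring
      rw [h1]
      calc μ (closedBall y (2 * (2 ^ n * ρ))) ≤ c * μ (closedBall y (2 ^ n * ρ)) :=
            hdbl y _ hr
        _ ≤ c * ((c : ℝ≥0∞) ^ n * μ (closedBall y ρ)) := by
            exact mul_le_mul_right ih _
        _ = (c : ℝ≥0∞) ^ (n+1) * μ (closedBall y ρ) := by ring
  have huniv : closedBall y Δ = Set.univ := by
    apply Set.eq_univ_iff_forall.mpr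
    intro p
    simpa [mem_closedBall] using hdiam p y
  have hmain : μ Set.univ ≤ (c : ℝ≥0∞) ^ l * μ S := by
    calc μ Set.univ = μ (closedBall y Δ) := by rw [huniv]
      _ = μ (closedBall y ((2:ℝ) ^ l * ρ)) := by rw [hρΔ]
      _ ≤ (c : ℝ≥0∞) ^ l * μ (closedBall y ρ) := hiter l
      _ ≤ (c : ℝ≥0∞) ^ l * μ S := mul_le_mul_right (measure_mono hball) _
  have hc0 : (c : ℝ≥0∞) ≠ 0 := by
    exact_mod_cast (lt_of_lt_of_le zero_lt_one hc).ne'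
  have hctop : (c : ℝ≥0∞) ≠ ⊤ := ENNReal.coe_ne_top
  have hcl0 : ((c : ℝ≥0∞)) ^ l ≠ 0 := pow_ne_zero _ hc0
  have hcltop : ((c : ℝ≥0∞)) ^ l ≠ ⊤ := by
    exact ENNReal.pow_ne_top hctop
  have hsecond : ((c : ℝ≥0∞))⁻¹ ^ l * μ Set.univ ≤ μ S := by
    rw [← ENNReal.inv_pow]
    calc ((c : ℝ≥0∞) ^ l)⁻¹ * μ Set.univ ≤ ((c : ℝ≥0∞) ^ l)⁻¹ * ((c : ℝ≥0∞) ^ l * μ S) :=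
          mul_le_mul_right hmain _
      _ = μ S := by rw [← mul_assoc, ENNReal.inv_mul_cancel hcl0 hcltop, one_mul]
  refine ⟨?_, hsecond⟩
  have hcompl : {z : M | ¬ α * dist z y < dist z x} = Sᶜ := by
    ext z; simp [hS]
  rw [hcompl]
  have hmeas : MeasurableSet S := hSopen.measurableSet
  have hμtop : μ Set.univ ≠ ⊤ := measure_ne_top μ _
  rw [measure_compl hmeas (measure_ne_top μ S)]
  calc μ Set.univ - μ S ≤ μ Set.univ - ((c : ℝ≥0∞))⁻¹ ^ l * μ Set.univ :=
        tsub_le_tsub_left hsecond _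
    _ = (1 - ((c : ℝ≥0∞))⁻¹ ^ l) * μ Set.univ := by
        rw [ENNReal.sub_mul (fun _ _ => hμtop), one_mul]
end

section
/- Let (M,d) be a metric space, α ≥ 1, and V ⊆ M a finite set with at least two points. Then for every x ∈ V there exists y ∈ V with y ≠ x such that d(x,z) ≤ α·d(x,y) for all z ∈ V; moreover, any such y satisfies d(x,y) ≥ diam(V)/(2α). -/
theorem stmt_16 {M : Type*} [MetricSpace M] (α : ℝ) (hα : 1 ≤ α)
    (V : Set M) (hfin : V.Finite) (hcard : 1 < V.ncard) :
    ∀ x ∈ V,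
      (∃ y ∈ V, y ≠ x ∧ ∀ z ∈ V, dist x z ≤ α * dist x y) ∧
        ∀ y ∈ V, y ≠ x → (∀ z ∈ V, dist x z ≤ α * dist x y) →
          Metric.diam V / (2 * α) ≤ dist x y := by
  intro x hx
  constructor
  · -- pick y maximizing dist x y
    have hne : V.Nonempty := ⟨x, hx⟩
    obtain ⟨y, hy, hmax⟩ := Set.Finite.exists_maximalFor (fun z => dist x z) V hfin hne
    have hmax' : ∀ z ∈ V, dist x z ≤ dist x y := by
      intro z hz
      by_contra h
      push_neg at h
      exact absurd (hmax hz h.le) (not_le.mpr h)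
    obtain ⟨w, hw, hwx⟩ := Set.exists_ne_of_one_lt_ncard hcard x
    have hpos : 0 < dist x y :=
      lt_of_lt_of_le (dist_pos.mpr (Ne.symm hwx)) (hmax' w hw)
    refine ⟨y, hy, fun h => by simp [h] at hpos, fun z hz => ?_⟩
    calc dist x z ≤ dist x y := hmax' z hz
      _ ≤ α * dist x y := by nlinarith
  · intro y hy hyx hprop
    have hd : 0 ≤ dist x y := dist_nonneg
    have h2α : 0 < 2 * α := by linarith
    rw [div_le_iff₀ h2α]
    apply Metric.diam_le_of_forall_dist_le (by positivity)
    intro u hu v hv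
    calc dist u v ≤ dist u x + dist x v := dist_triangle _ _ _
      _ ≤ α * dist x y + α * dist x y := by
          have := hprop u hu; have := hprop v hv
          rw [dist_comm u x]; linarith
      _ = dist x y * (2 * α) := by ring
end
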